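/- arXiv:2308.15818 — 2 statements merged into one kernel-verified Lean document; each statement's English description precedes it below -/
import Mathlib

section
/- Let p > 2, s ≥ 0, and let a, b be nonzero vectors in ℝ^n. Then there exists a constant c depending only on p such that ∫₀¹ (|a + σb|² + s²)^((p-3)/2) dσ ≤ c · ((|a| + s)^(p-2) + |b|^(p-2)) / (|a| + s). -/
set_option maxHeartbeats 800000

open MeasureTheory intervalIntegral Real Set

lemma absRpowII {r : ℝ} (hr : -1 < r) (a b : ℝ) :
    IntervalIntegrable (fun u : ℝ => |u| ^ r) volume a b := by
  suffices h : ∀ c : ℝ, IntervalIntegrable (fun u : ℝ => |u| ^ r) volume 0 c by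
    exact ((h a).symm.trans (h b))
  have key : ∀ c : ℝ, 0 ≤ c → IntervalIntegrable (fun u : ℝ => |u| ^ r) volume 0 c := by
    intro c hc
    rw [intervalIntegrable_iff, uIoc_of_le hc]
    apply (intervalIntegrable_rpow' hr (a := 0) (b := c)).1.congr_fun ?_ measurableSet_Ioc
    · intro x hx
      simp only [abs_of_pos hx.1]
  intro c
  rcases le_total 0 c with hc | hc
  · exact key c hc
  · rw [IntervalIntegrable.iff_comp_neg, neg_zero]
    have := key (-c) (by linarith)
    simpa [abs_neg] using this

lemma absRpowSym {r : ℝ} (hr : -1 < r) (d : ℝ) (hd : 0 ≤ d) :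
    ∫ u in (-d)..d, |u| ^ r = 2 * d ^ (r + 1) / (r + 1) := by
  have hr1 : 0 < r + 1 := by linarith
  have h0 : (∫ u in (0:ℝ)..d, |u| ^ r) = d ^ (r + 1) / (r + 1) := by
    rw [integral_congr (g := fun u : ℝ => u ^ r) ?_, integral_rpow (Or.inl hr)]
    · rw [Real.zero_rpow hr1.ne', sub_zero]
    · intro x hx
      rw [uIcc_of_le hd] at hx
      simp only [abs_of_nonneg hx.1]
  have hneg : (∫ u in (-d)..(0:ℝ), |u| ^ r) = d ^ (r + 1) / (r + 1) := by
    have := integral_comp_neg (a := (0:ℝ)) (b := d) (fun u : ℝ => |u| ^ r)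
    simp only [abs_neg, neg_zero] at this
    rw [← this, h0]
  rw [← integral_add_adjacent_intervals (absRpowII hr (-d) 0) (absRpowII hr 0 d), h0, hneg]
  ring

lemma absRpowIntegralLe {r : ℝ} (hr : -1 < r) (t B : ℝ) (hB : 0 < B) :
    ∫ σ in (0:ℝ)..1, |t + σ * B| ^ r ≤ 2 * (|t| + B) ^ (r + 1) / ((r + 1) * B) := by
  have hr1 : 0 < r + 1 := by linarith
  have h1 : (∫ σ in (0:ℝ)..1, |t + σ * B| ^ r)
      = B⁻¹ * ∫ u in (t + B * 0)..(t + B * 1), |u| ^ r := by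
    have := integral_comp_add_mul (fun u : ℝ => |u| ^ r) hB.ne' t (a := 0) (b := 1)
    rw [smul_eq_mul] at this
    rw [← this]
    simp_rw [mul_comm B _]
  rw [h1]
  have h2 : (∫ u in (t + B * 0)..(t + B * 1), |u| ^ r)
      ≤ ∫ u in (-(|t| + B))..(|t| + B), |u| ^ r := by
    apply integral_mono_interval (by cases abs_cases t <;> simp <;> linarith)
      (by linarith) (by cases abs_cases t <;> simp <;> linarith)
      (Filter.Eventually.of_forall fun x => by positivity)
      (absRpowII hr _ _)
  calc B⁻¹ * ∫ u in (t + B * 0)..(t + B * 1), |u| ^ r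
      ≤ B⁻¹ * ∫ u in (-(|t| + B))..(|t| + B), |u| ^ r := by
        apply mul_le_mul_of_nonneg_left h2 (by positivity)
    _ = 2 * (|t| + B) ^ (r + 1) / ((r + 1) * B) := by
        rw [absRpowSym hr _ (by positivity)]
        field_simp

lemma absRpowCompII {r : ℝ} (hr : -1 < r) (t B : ℝ) (hB : B ≠ 0) :
    IntervalIntegrable (fun σ : ℝ => |t + σ * B| ^ r) volume 0 1 := by
  have h1 := (absRpowII hr t (t + B)).comp_add_left t
  simp only [sub_self, add_sub_cancel_left] at h1
  have h2 := h1.comp_mul_right (c := B)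
  simpa [zero_div, div_self hB] using h2

lemma sqRpow (x : ℝ) (hx : 0 ≤ x) (e : ℝ) : (x ^ 2) ^ e = x ^ (2 * e) := by
  rw [← Real.rpow_natCast x 2, ← Real.rpow_mul hx]
  norm_num

lemma addRpowLe {q : ℝ} (hq : 0 ≤ q) {A B : ℝ} (hA : 0 ≤ A) (hB : 0 ≤ B) :
    (A + B) ^ q ≤ 2 ^ q * (A ^ q + B ^ q) := by
  have h1 : A + B ≤ 2 * max A B := by
    rcases le_total A B with h | h
    · rw [max_eq_right h]; linarith
    · rw [max_eq_left h]; linarith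
  calc (A + B) ^ q ≤ (2 * max A B) ^ q :=
        Real.rpow_le_rpow (by linarith) h1 hq
    _ = 2 ^ q * (max A B) ^ q := Real.mul_rpow (by norm_num) (le_max_of_le_left hA)
    _ ≤ 2 ^ q * (A ^ q + B ^ q) := by
        apply mul_le_mul_of_nonneg_left ?_ (Real.rpow_nonneg (by norm_num) q)
        rcases le_total A B with h | h
        · rw [max_eq_right h]
          exact le_add_of_nonneg_left (Real.rpow_nonneg hA q)
        · rw [max_eq_left h]
          exact le_add_of_nonneg_right (Real.rpow_nonneg hB q)

/-- Lemma 7.1 of the paper (algebraic lemma): for `p > 2`, `s ≥ 0` and nonzero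
vectors `a b : ℝⁿ`, one has
`∫₀¹ (|a + σ b|² + s²)^((p-3)/2) dσ ≤ c ((|a| + s)^(p-2) + |b|^(p-2)) / (|a| + s)`,
with `c` depending only on `p`. -/
theorem stmt_0 (p : ℝ) (hp : 2 < p) :
    ∃ c : ℝ, 0 < c ∧ ∀ (n : ℕ) (s : ℝ) (a b : EuclideanSpace ℝ (Fin n)),
      0 ≤ s → a ≠ 0 → b ≠ 0 →
      (∫ σ in (0:ℝ)..1, (‖a + σ • b‖ ^ 2 + s ^ 2) ^ ((p - 3) / 2))
        ≤ c * ((‖a‖ + s) ^ (p - 2) + ‖b‖ ^ (p - 2)) / (‖a‖ + s) := by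
  have hp2 : 0 < p - 2 := by linarith
  have h2p : 0 < (2:ℝ) ^ p := Real.rpow_pos_of_pos two_pos p
  have hd : 0 < 8 / (p - 2) := by positivity
  refine ⟨2 ^ p * (8 / (p - 2) + 1) + 4, by positivity, ?_⟩
  intro n s a b hs ha hb
  have hA : 0 < ‖a‖ + s := add_pos_of_pos_of_nonneg (norm_pos_iff.mpr ha) hs
  have hB : 0 < ‖b‖ := norm_pos_iff.mpr hb
  set e : ℝ := (p - 3) / 2 with he
  set A : ℝ := ‖a‖ + s with hAdef
  set B : ℝ := ‖b‖ with hBdef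
  have hX : 0 ≤ A ^ (p - 2) + B ^ (p - 2) := by positivity
  rw [le_div_iff₀ hA]
  by_cases hfi : IntervalIntegrable
      (fun σ : ℝ => (‖a + σ • b‖ ^ 2 + s ^ 2) ^ e) volume 0 1
  swap
  · rw [intervalIntegral.integral_undef hfi, zero_mul]
    positivity
  have hI0 : 0 ≤ ∫ σ in (0:ℝ)..1, (‖a + σ • b‖ ^ 2 + s ^ 2) ^ e :=
    intervalIntegral.integral_nonneg (by norm_num) (fun x _ => by positivity)
  rcases le_or_gt 3 p with h3 | h3
  · -- Case p ≥ 3 : pointwise bound by (A+B)^(p-3)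
    have he2 : 0 ≤ e := by rw [he]; linarith
    have hpt : ∀ σ ∈ Icc (0:ℝ) 1,
        (‖a + σ • b‖ ^ 2 + s ^ 2) ^ e ≤ (A + B) ^ (p - 3) := by
      intro σ hσ
      have hn : ‖a + σ • b‖ ≤ ‖a‖ + B := by
        calc ‖a + σ • b‖ ≤ ‖a‖ + ‖σ • b‖ := norm_add_le _ _
          _ = ‖a‖ + |σ| * B := by rw [norm_smul, Real.norm_eq_abs]
          _ ≤ ‖a‖ + B := by
              have : |σ| * B ≤ 1 * B := by
                apply mul_le_mul_of_nonneg_right _ hB.le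
                rw [abs_of_nonneg hσ.1]; exact hσ.2
              linarith
      have hbase : ‖a + σ • b‖ ^ 2 + s ^ 2 ≤ (A + B) ^ 2 := by
        have h0 : 0 ≤ ‖a + σ • b‖ := norm_nonneg _
        have h1 : 0 ≤ ‖a‖ := norm_nonneg _
        nlinarith [hn, hs, hB.le]
      calc (‖a + σ • b‖ ^ 2 + s ^ 2) ^ e ≤ ((A + B) ^ 2) ^ e :=
            Real.rpow_le_rpow (by positivity) hbase he2
        _ = (A + B) ^ (2 * e) := sqRpow _ (by positivity) e
        _ = (A + B) ^ (p - 3) := by congr 1; rw [he]; ring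
    have hI : (∫ σ in (0:ℝ)..1, (‖a + σ • b‖ ^ 2 + s ^ 2) ^ e)
        ≤ (A + B) ^ (p - 3) := by
      have := intervalIntegral.integral_mono_on (by norm_num : (0:ℝ) ≤ 1) hfi
        intervalIntegrable_const hpt
      simpa using this
    have e1 : (A + B) ^ (p - 3) * (A + B) = (A + B) ^ (p - 2) := by
      rw [show p - 2 = p - 3 + 1 by ring, Real.rpow_add_one (by positivity)]
    have e2 : (A + B) ^ (p - 2) ≤ 2 ^ (p - 2) * (A ^ (p - 2) + B ^ (p - 2)) :=
      addRpowLe (by linarith) hA.le hB.le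
    have e3 : (2:ℝ) ^ (p - 2) ≤ 2 ^ p :=
      Real.rpow_le_rpow_of_exponent_le one_le_two (by linarith)
    calc (∫ σ in (0:ℝ)..1, (‖a + σ • b‖ ^ 2 + s ^ 2) ^ e) * A
        ≤ (A + B) ^ (p - 3) * (A + B) :=
          mul_le_mul hI (by linarith) hA.le (Real.rpow_nonneg (by positivity) _)
      _ = (A + B) ^ (p - 2) := e1
      _ ≤ 2 ^ (p - 2) * (A ^ (p - 2) + B ^ (p - 2)) := e2
      _ ≤ (2 ^ p * (8 / (p - 2) + 1) + 4) * (A ^ (p - 2) + B ^ (p - 2)) := by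
          apply mul_le_mul_of_nonneg_right _ hX
          nlinarith [e3, hd, h2p]
  · -- Case 2 < p < 3
    have he2 : e < 0 := by rw [he]; linarith
    have hr : -1 < p - 3 := by linarith
    by_cases hc : B ≤ A / 4
    · -- small B : pointwise lower bound on the base
      have hlow : ∀ σ ∈ Icc (0:ℝ) 1, (A / 4) ^ 2 ≤ ‖a + σ • b‖ ^ 2 + s ^ 2 := by
        intro σ hσ
        rcases le_total (A / 2) ‖a‖ with hna | hna
        · have h2 : ‖a‖ - ‖σ • b‖ ≤ ‖a + σ • b‖ := by
            have h4 : ‖a‖ ≤ ‖a + σ • b‖ + ‖σ • b‖ := by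
              calc ‖a‖ = ‖(a + σ • b) + (-(σ • b))‖ := by
                    congr 1; abel
                _ ≤ ‖a + σ • b‖ + ‖-(σ • b)‖ := norm_add_le _ _
                _ = ‖a + σ • b‖ + ‖σ • b‖ := by rw [norm_neg]
            linarith
          have h3 : ‖σ • b‖ ≤ A / 4 := by
            rw [norm_smul, Real.norm_eq_abs, abs_of_nonneg hσ.1]
            nlinarith [hσ.1, hσ.2, hB.le, hc]
          have h1 : A / 4 ≤ ‖a + σ • b‖ := by linarith
          have h5 := pow_le_pow_left₀ (by positivity : (0:ℝ) ≤ A / 4) h1 2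
          linarith [sq_nonneg s]
        · have hsA : A / 2 ≤ s := by
            rw [hAdef] at hna ⊢; linarith
          have h5 := pow_le_pow_left₀ (by positivity : (0:ℝ) ≤ A / 4)
            (by linarith : A / 4 ≤ s) 2
          linarith [sq_nonneg ‖a + σ • b‖]
      have hpt : ∀ σ ∈ Icc (0:ℝ) 1,
          (‖a + σ • b‖ ^ 2 + s ^ 2) ^ e ≤ (A / 4) ^ (p - 3) := by
        intro σ hσ
        calc (‖a + σ • b‖ ^ 2 + s ^ 2) ^ e ≤ ((A / 4) ^ 2) ^ e :=
              Real.rpow_le_rpow_of_nonpos (by positivity) (hlow σ hσ) he2.le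
          _ = (A / 4) ^ (2 * e) := sqRpow _ (by positivity) e
          _ = (A / 4) ^ (p - 3) := by congr 1; rw [he]; ring
      have hI : (∫ σ in (0:ℝ)..1, (‖a + σ • b‖ ^ 2 + s ^ 2) ^ e)
          ≤ (A / 4) ^ (p - 3) := by
        have := intervalIntegral.integral_mono_on (by norm_num : (0:ℝ) ≤ 1) hfi
          intervalIntegrable_const hpt
        simpa using this
      have e1 : (A / 4) ^ (p - 3) = A ^ (p - 3) * 4 ^ (3 - p) := by
        rw [Real.div_rpow hA.le (by norm_num), div_eq_mul_inv,
          ← Real.rpow_neg (by norm_num), show -(p - 3) = 3 - p by ring]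
      have e2 : (4:ℝ) ^ (3 - p) ≤ 4 := by
        have := Real.rpow_le_rpow_of_exponent_le (by norm_num : (1:ℝ) ≤ 4)
          (by linarith : 3 - p ≤ 1)
        simpa using this
      have e3 : A ^ (p - 3) * A = A ^ (p - 2) := by
        rw [show p - 2 = p - 3 + 1 by ring, Real.rpow_add_one hA.ne']
      calc (∫ σ in (0:ℝ)..1, (‖a + σ • b‖ ^ 2 + s ^ 2) ^ e) * A
          ≤ (A / 4) ^ (p - 3) * A := mul_le_mul_of_nonneg_right hI hA.le
        _ = A ^ (p - 3) * A * 4 ^ (3 - p) := by rw [e1]; ring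
        _ ≤ A ^ (p - 2) * 4 := by
            rw [e3]
            exact mul_le_mul_of_nonneg_left e2 (Real.rpow_nonneg hA.le _)
        _ ≤ (2 ^ p * (8 / (p - 2) + 1) + 4) * (A ^ (p - 2) + B ^ (p - 2)) := by
            have hpos : 0 ≤ 2 ^ p * (8 / (p - 2) + 1) * (A ^ (p - 2) + B ^ (p - 2)) := by
              positivity
            nlinarith [hpos, Real.rpow_nonneg hB.le (p - 2)]
    · -- large B : use the inner-product lower bound
      push_neg at hc
      set t : ℝ := (inner ℝ a b : ℝ) / B with ht
      have hpt : ∀ σ : ℝ, t + σ * B ≠ 0 →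
          (‖a + σ • b‖ ^ 2 + s ^ 2) ^ e ≤ |t + σ * B| ^ (p - 3) := by
        intro σ hσ
        have hkey : (t + σ * B) * B = (inner ℝ (a + σ • b) b : ℝ) := by
          rw [inner_add_left, real_inner_smul_left, real_inner_self_eq_norm_sq, ht]
          rw [← hBdef]
          field_simp
        have h1 : |t + σ * B| ≤ ‖a + σ • b‖ := by
          have h2 := abs_real_inner_le_norm (a + σ • b) b
          rw [← hkey, abs_mul, abs_of_pos hB] at h2
          exact le_of_mul_le_mul_right h2 hB
        have h3 : (t + σ * B) ^ 2 ≤ ‖a + σ • b‖ ^ 2 + s ^ 2 := by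
          nlinarith [abs_nonneg (t + σ * B), h1, sq_nonneg s, sq_abs (t + σ * B)]
        have hpos : 0 < (t + σ * B) ^ 2 := by
          rw [← sq_abs]; exact pow_pos (abs_pos.mpr hσ) 2
        calc (‖a + σ • b‖ ^ 2 + s ^ 2) ^ e ≤ ((t + σ * B) ^ 2) ^ e :=
              Real.rpow_le_rpow_of_nonpos hpos h3 he2.le
          _ = (|t + σ * B| ^ 2) ^ e := by rw [sq_abs]
          _ = |t + σ * B| ^ (2 * e) := sqRpow _ (abs_nonneg _) e
          _ = |t + σ * B| ^ (p - 3) := by congr 1; rw [he]; ring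
      have hg := absRpowCompII hr t B hB.ne'
      have hae : (fun σ : ℝ => (‖a + σ • b‖ ^ 2 + s ^ 2) ^ e)
          ≤ᵐ[volume] fun σ : ℝ => |t + σ * B| ^ (p - 3) := by
        rw [Filter.EventuallyLE, ae_iff]
        refine measure_mono_null ?_ (measure_singleton (-t / B))
        · intro σ hσ
          simp only [mem_setOf_eq] at hσ
          by_contra hne
          apply hσ
          apply hpt
          intro h0
          apply hne
          have : σ = -t / B := by field_simp; linarith
          simp [this]
      have hI : (∫ σ in (0:ℝ)..1, (‖a + σ • b‖ ^ 2 + s ^ 2) ^ e)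
          ≤ ∫ σ in (0:ℝ)..1, |t + σ * B| ^ (p - 3) :=
        intervalIntegral.integral_mono_ae (by norm_num) hfi hg hae
      have hI2 := absRpowIntegralLe hr t B hB
      rw [show p - 3 + 1 = p - 2 by ring] at hI2
      have htle : |t| ≤ ‖a‖ := by
        rw [ht, abs_div, abs_of_pos hB, div_le_iff₀ hB]
        exact abs_real_inner_le_norm a b
      have h4 : (|t| + B) ^ (p - 2) ≤ (A + B) ^ (p - 2) :=
        Real.rpow_le_rpow (by positivity) (by rw [hAdef]; linarith) (by linarith)
      have h5 : (A + B) ^ (p - 2) ≤ 2 ^ (p - 2) * (A ^ (p - 2) + B ^ (p - 2)) :=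
        addRpowLe (by linarith) hA.le hB.le
      have e3 : (2:ℝ) ^ (p - 2) ≤ 2 ^ p :=
        Real.rpow_le_rpow_of_exponent_le one_le_two (by linarith)
      calc (∫ σ in (0:ℝ)..1, (‖a + σ • b‖ ^ 2 + s ^ 2) ^ e) * A
          ≤ (2 * (|t| + B) ^ (p - 2) / ((p - 2) * B)) * A :=
            mul_le_mul_of_nonneg_right (hI.trans hI2) hA.le
        _ ≤ (2 * (A + B) ^ (p - 2) / ((p - 2) * B)) * (4 * B) := by
            gcongr
            linarith
        _ = 8 / (p - 2) * (A + B) ^ (p - 2) := by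
            field_simp
            ring
        _ ≤ 8 / (p - 2) * (2 ^ (p - 2) * (A ^ (p - 2) + B ^ (p - 2))) :=
            mul_le_mul_of_nonneg_left h5 hd.le
        _ ≤ (2 ^ p * (8 / (p - 2) + 1) + 4) * (A ^ (p - 2) + B ^ (p - 2)) := by
            rw [← mul_assoc]
            apply mul_le_mul_of_nonneg_right _ hX
            nlinarith [e3, hd, h2p, Real.rpow_pos_of_pos two_pos (p - 2)]
end

section
/- Let p satisfy 2 < p < 3, s ≥ 0, and let a, b ∈ ℝ^n with b ≠ 0 and |b| > (|a|+s)/2. Setting μ = |a| + s, one has ∫₀¹ |μ - σ|b||^(p-3) dσ ≤ c (μ^(p-2) + |b|^(p-2)) / |b| for some constant c depending only on p. -/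
open intervalIntegral Real Set

private lemma abs_rpow_intInt (r : ℝ) (hr : -1 < r) (a b : ℝ) :
    IntervalIntegrable (fun u : ℝ => |u| ^ r) MeasureTheory.volume a b := by
  suffices h : ∀ c : ℝ, 0 ≤ c → IntervalIntegrable (fun u : ℝ => |u| ^ r)
      MeasureTheory.volume 0 c by
    have key : ∀ c : ℝ, IntervalIntegrable (fun u : ℝ => |u| ^ r) MeasureTheory.volume 0 c := by
      intro c
      rcases le_total 0 c with hc | hc
      · exact h c hc
      · rw [IntervalIntegrable.iff_comp_neg]
        simpa using h (-c) (by linarith)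
    exact (key a).symm.trans (key b)
  intro c hc
  have h1 : IntervalIntegrable (fun u : ℝ => u ^ r) MeasureTheory.volume 0 c :=
    intervalIntegrable_rpow' hr
  rw [intervalIntegrable_iff] at h1 ⊢
  refine h1.congr_fun ?_ measurableSet_uIoc
  intro x hx
  rw [uIoc_of_le hc] at hx
  simp [abs_of_nonneg hx.1.le]

private lemma int_abs_rpow_nonneg (r : ℝ) (hr : -1 < r) (m : ℝ) (hm : 0 ≤ m) :
    (∫ u in (0:ℝ)..m, |u| ^ r) = m ^ (r + 1) / (r + 1) := by
  have h1 : (∫ u in (0:ℝ)..m, |u| ^ r) = ∫ u in (0:ℝ)..m, u ^ r := by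
    apply intervalIntegral.integral_congr
    intro x hx
    rw [uIcc_of_le hm] at hx
    simp [abs_of_nonneg hx.1]
  rw [h1, integral_rpow (Or.inl hr), Real.zero_rpow (by linarith), sub_zero]

private lemma int_abs_rpow_nonpos (r : ℝ) (hr : -1 < r) (x : ℝ) (hx : x ≤ 0) :
    (∫ u in x..(0:ℝ), |u| ^ r) = (-x) ^ (r + 1) / (r + 1) := by
  have h := intervalIntegral.integral_comp_neg (a := (0:ℝ)) (b := -x)
    (fun u : ℝ => |u| ^ r)
  simp only [neg_neg, neg_zero, abs_neg] at h
  rw [← h, int_abs_rpow_nonneg r hr (-x) (by linarith)]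

/-- Second case (for `2 < p < 3`) in the proof of the algebraic lemma: with
`μ = |a| + s`, if `b ≠ 0` and `|b| > μ/2`, then
`∫₀¹ |μ - σ |b||^(p-3) dσ ≤ c (μ^(p-2) + |b|^(p-2)) / |b|` with `c = c(p)`. -/
theorem stmt_2 (p : ℝ) (hp2 : 2 < p) (hp3 : p < 3) :
    ∃ c : ℝ, 0 < c ∧ ∀ (n : ℕ) (s : ℝ) (a b : EuclideanSpace ℝ (Fin n)),
      0 ≤ s → b ≠ 0 → (‖a‖ + s) / 2 < ‖b‖ →
      (∫ σ in (0:ℝ)..1, |(‖a‖ + s) - σ * ‖b‖| ^ (p - 3))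
        ≤ c * ((‖a‖ + s) ^ (p - 2) + ‖b‖ ^ (p - 2)) / ‖b‖ := by
  have hp2' : (0:ℝ) < p - 2 := by linarith
  refine ⟨1 / (p - 2), by positivity, ?_⟩
  intro n s a b hs hb hμB
  set μ : ℝ := ‖a‖ + s with hμdef
  set B : ℝ := ‖b‖ with hBdef
  have hB : 0 < B := norm_pos_iff.mpr hb
  have hμ : 0 ≤ μ := by positivity
  have hr : (-1:ℝ) < p - 3 := by linarith
  have hre : p - 3 + 1 = p - 2 := by ring
  -- substitution σ ↦ σ * B
  have step1 : (∫ σ in (0:ℝ)..1, |μ - σ * B| ^ (p - 3))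
      = B⁻¹ * ∫ x in (0:ℝ)..B, |μ - x| ^ (p - 3) := by
    have h := intervalIntegral.integral_comp_mul_right (a := (0:ℝ)) (b := 1)
      (fun x : ℝ => |μ - x| ^ (p - 3)) hB.ne'
    simpa using h
  -- substitution x ↦ μ - x
  have step2 : (∫ x in (0:ℝ)..B, |μ - x| ^ (p - 3))
      = ∫ u in (μ - B)..μ, |u| ^ (p - 3) := by
    have h := intervalIntegral.integral_comp_sub_left (a := (0:ℝ)) (b := B)
      (fun u : ℝ => |u| ^ (p - 3)) μ
    simpa using h
  have key : (∫ u in (μ - B)..μ, |u| ^ (p - 3))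
      ≤ (μ ^ (p - 2) + B ^ (p - 2)) / (p - 2) := by
    rcases le_total μ B with hc | hc
    · -- split at 0
      have hadd := intervalIntegral.integral_add_adjacent_intervals
        (abs_rpow_intInt (p - 3) hr (μ - B) 0) (abs_rpow_intInt (p - 3) hr 0 μ)
      rw [← hadd, int_abs_rpow_nonpos (p - 3) hr (μ - B) (by linarith),
        int_abs_rpow_nonneg (p - 3) hr μ hμ, hre, neg_sub]
      have h1 : (B - μ) ^ (p - 2) ≤ B ^ (p - 2) :=
        Real.rpow_le_rpow (by linarith) (by linarith) hp2'.le
      rw [← add_div, div_le_div_iff_of_pos_right hp2']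
      linarith
    · -- μ - B ≥ 0 : abs is identity
      have h0 : 0 ≤ μ - B := by linarith
      have h1 : (∫ u in (μ - B)..μ, |u| ^ (p - 3)) = ∫ u in (μ - B)..μ, u ^ (p - 3) := by
        apply intervalIntegral.integral_congr
        intro x hx
        rw [uIcc_of_le (by linarith : μ - B ≤ μ)] at hx
        simp [abs_of_nonneg (le_trans h0 hx.1)]
      rw [h1, integral_rpow (Or.inl hr), hre]
      have h2 : 0 ≤ (μ - B) ^ (p - 2) := Real.rpow_nonneg h0 _
      have h3 : 0 ≤ B ^ (p - 2) := Real.rpow_nonneg hB.le _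
      rw [div_le_div_iff_of_pos_right hp2']
      linarith
  calc (∫ σ in (0:ℝ)..1, |μ - σ * B| ^ (p - 3))
      = B⁻¹ * ∫ u in (μ - B)..μ, |u| ^ (p - 3) := by rw [step1, step2]
    _ ≤ B⁻¹ * ((μ ^ (p - 2) + B ^ (p - 2)) / (p - 2)) := by
        exact mul_le_mul_of_nonneg_left key (by positivity)
    _ = 1 / (p - 2) * (μ ^ (p - 2) + B ^ (p - 2)) / B := by
        rw [one_div, div_eq_mul_inv, div_eq_mul_inv]; ring
end
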